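/- arXiv:1209.4095 — 4 statements merged into one kernel-verified Lean document; each statement's English description precedes it below -/
import Mathlib

section
/- Let B be an n×n exchange matrix and let R be ℚ or ℝ. Then there exists an R-basis for B. -/
open scoped BigOperators

namespace MutationFanPaper

/-- An exchange matrix: a skew-symmetrizable `n × n` integer matrix. -/
def IsExchangeMatrix {n : ℕ} (B : Matrix (Fin n) (Fin n) ℤ) : Prop :=
  ∃ d : Fin n → ℤ, (∀ i, 0 < d i) ∧ ∀ i j, d i * B i j = -(d j * B j i)

/-- Matrix mutation in direction `k`. -/
def mutate {n : ℕ} (B : Matrix (Fin n) (Fin n) ℤ) (k : Fin n) : Matrix (Fin n) (Fin n) ℤ :=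
  fun i j =>
    if i = k ∨ j = k then -B i j
    else B i j + Int.sign (B k j) * max (B i k * B k j) 0

/-- The mutation map `η_k^B : ℝⁿ → ℝⁿ`. -/
noncomputable def etaStep {n : ℕ} (B : Matrix (Fin n) (Fin n) ℤ) (k : Fin n) (a : Fin n → ℝ) : Fin n → ℝ :=
  fun j =>
    if j = k then -a k
    else if 0 ≤ a k ∧ 0 ≤ B k j then a j + a k * (B k j : ℝ)
    else if a k ≤ 0 ∧ B k j ≤ 0 then a j - a k * (B k j : ℝ)
    else a j

/-- `etaSeq B κ` is the mutation map `η_κ^B`, where the list `κ` records the indices in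
order of application (the head of the list is applied first, using the matrix `B` itself). -/
noncomputable def etaSeq {n : ℕ} (B : Matrix (Fin n) (Fin n) ℤ) : List (Fin n) → (Fin n → ℝ) → Fin n → ℝ
  | [], a => a
  | k :: κ, a => etaSeq (mutate B k) κ (etaStep B k a)

/-- Iterated matrix mutation along a list of indices; the head is applied first. -/
def mutateSeq {n : ℕ} (B : Matrix (Fin n) (Fin n) ℤ) : List (Fin n) → Matrix (Fin n) (Fin n) ℤ
  | [] => B
  | k :: κ => mutateSeq (mutate B k) κ

/-- The copy of ℤ inside ℝ, as a subring. -/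
def intSR : Subring ℝ := (Int.castRingHom ℝ).range

/-- The copy of ℚ inside ℝ, as a subring. -/
noncomputable def ratSR : Subring ℝ := (Rat.castHom ℝ).range

/-- The formal expression `Σ_{i ∈ S} c i • v i` is a `B`-coherent linear relation. -/
def IsBCoherentRel {n : ℕ} (B : Matrix (Fin n) (Fin n) ℤ) {ι : Type*} (S : Finset ι)
    (v : ι → Fin n → ℝ) (c : ι → ℝ) : Prop :=
  ∀ κ : List (Fin n),
    (∑ i ∈ S, c i • etaSeq B κ (v i)) = 0 ∧
    (∑ i ∈ S, c i • (fun j => min (etaSeq B κ (v i) j) 0)) = 0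

/-- The formal expression `a - Σ_{i ∈ S} c i • v i` is a `B`-coherent linear relation. -/
def IsBCoherentDiff {n : ℕ} (B : Matrix (Fin n) (Fin n) ℤ) (a : Fin n → ℝ) {ι : Type*}
    (S : Finset ι) (v : ι → Fin n → ℝ) (c : ι → ℝ) : Prop :=
  ∀ κ : List (Fin n),
    (etaSeq B κ a - ∑ i ∈ S, c i • etaSeq B κ (v i)) = 0 ∧
    ((fun j => min (etaSeq B κ a j) 0) -
      ∑ i ∈ S, c i • (fun j => min (etaSeq B κ (v i) j) 0)) = 0

/-- The family `b` is an `R`-spanning set for `B` (a family of vectors in `Rⁿ` such that every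
`a ∈ Rⁿ` admits a `B`-coherent relation `a - Σ_{i ∈ S} c i • b i` with coefficients in `R`). -/
def SpanningOver {n : ℕ} (R : Subring ℝ) (B : Matrix (Fin n) (Fin n) ℤ) {ι : Type*}
    (b : ι → Fin n → ℝ) : Prop :=
  (∀ i j, b i j ∈ R) ∧
  ∀ a : Fin n → ℝ, (∀ j, a j ∈ R) →
    ∃ (S : Finset ι) (c : ι → ℝ), (∀ i ∈ S, c i ∈ R) ∧ IsBCoherentDiff B a S b c

/-- The family `b` is an `R`-independent set for `B`. -/
def IndependentOver {n : ℕ} (R : Subring ℝ) (B : Matrix (Fin n) (Fin n) ℤ) {ι : Type*}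
    (b : ι → Fin n → ℝ) : Prop :=
  (∀ i j, b i j ∈ R) ∧
  ∀ (S : Finset ι) (c : ι → ℝ), (∀ i ∈ S, c i ∈ R) → IsBCoherentRel B S b c →
    ∀ i ∈ S, c i = 0

/-- The family `b` is an `R`-basis for `B`. -/
def BasisOver {n : ℕ} (R : Subring ℝ) (B : Matrix (Fin n) (Fin n) ℤ) {ι : Type*}
    (b : ι → Fin n → ℝ) : Prop :=
  SpanningOver R B b ∧ IndependentOver R B b

/-- The family `b` is a positive `R`-basis for `B`. -/
def PositiveBasisOver {n : ℕ} (R : Subring ℝ) (B : Matrix (Fin n) (Fin n) ℤ) {ι : Type*}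
    (b : ι → Fin n → ℝ) : Prop :=
  BasisOver R B b ∧
  ∀ a : Fin n → ℝ, (∀ j, a j ∈ R) →
    ∃ (S : Finset ι) (c : ι → ℝ), (∀ i ∈ S, c i ∈ R ∧ 0 ≤ c i) ∧ IsBCoherentDiff B a S b c

/-- The relation `a ≡^B a'`: all mutation maps give componentwise equal signs. -/
def eqB {n : ℕ} (B : Matrix (Fin n) (Fin n) ℤ) (a a' : Fin n → ℝ) : Prop :=
  ∀ (κ : List (Fin n)) (j : Fin n),
    Real.sign (etaSeq B κ a j) = Real.sign (etaSeq B κ a' j)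

/-- A `B`-class: an equivalence class of `≡^B`. -/
def IsBClass {n : ℕ} (B : Matrix (Fin n) (Fin n) ℤ) (C : Set (Fin n → ℝ)) : Prop :=
  ∃ a, C = {a' | eqB B a a'}

/-- A `B`-cone: the closure of a `B`-class. -/
def IsBCone {n : ℕ} (B : Matrix (Fin n) (Fin n) ℤ) (C : Set (Fin n → ℝ)) : Prop :=
  ∃ D, IsBClass B D ∧ C = closure D

/-- A convex cone: a set closed under addition and positive scaling. -/
def IsConvexCone {n : ℕ} (C : Set (Fin n → ℝ)) : Prop :=
  (∀ x ∈ C, ∀ y ∈ C, x + y ∈ C) ∧ ∀ x ∈ C, ∀ r : ℝ, 0 < r → r • x ∈ C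

/-- `F` is a face of the convex cone `C`: a convex subset such that any line segment
contained in `C` whose interior meets `F` lies entirely in `F`. -/
def IsFaceOf {n : ℕ} (C F : Set (Fin n → ℝ)) : Prop :=
  F ⊆ C ∧ Convex ℝ F ∧
    ∀ x y : Fin n → ℝ, segment ℝ x y ⊆ C → (openSegment ℝ x y ∩ F).Nonempty →
      segment ℝ x y ⊆ F

/-- The mutation fan `ℱ_B`: all `B`-cones and all faces of `B`-cones. -/
def MutFan {n : ℕ} (B : Matrix (Fin n) (Fin n) ℤ) : Set (Set (Fin n → ℝ)) :=
  {C | IsBCone B C ∨ ∃ D, IsBCone B D ∧ IsFaceOf D C}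

/-- A fan: a collection of closed convex cones, closed under taking faces, in which the
intersection of any two cones is a face of each. -/
def IsFan {n : ℕ} (F : Set (Set (Fin n → ℝ))) : Prop :=
  (∀ C ∈ F, IsClosed C ∧ IsConvexCone C) ∧
  (∀ C ∈ F, ∀ G, IsFaceOf C G → G ∈ F) ∧
  ∀ C ∈ F, ∀ D ∈ F, IsFaceOf C (C ∩ D) ∧ IsFaceOf D (C ∩ D)

/-- A set of vectors is sign-coherent if no two of its members have strictly opposite
signs in any coordinate. -/
def SignCoherentSet {n : ℕ} (S : Set (Fin n → ℝ)) : Prop :=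
  ∀ x ∈ S, ∀ y ∈ S, ∀ j, ¬(x j < 0 ∧ 0 < y j)

/-- The ray spanned by a vector `v`. -/
def rayOf {n : ℕ} (v : Fin n → ℝ) : Set (Fin n → ℝ) :=
  {x | ∃ t : ℝ, 0 ≤ t ∧ x = t • v}

/-- `C` is a ray of the fan `F`: a one-dimensional cone belonging to `F`. -/
def IsRayOf {n : ℕ} (F : Set (Set (Fin n → ℝ))) (C : Set (Fin n → ℝ)) : Prop :=
  C ∈ F ∧ ∃ v : Fin n → ℝ, v ≠ 0 ∧ C = rayOf v

/-- A simplicial cone: the nonnegative span of finitely many linearly independent vectors. -/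
def IsSimplicialCone {n : ℕ} (C : Set (Fin n → ℝ)) : Prop :=
  ∃ (k : ℕ) (v : Fin k → Fin n → ℝ), LinearIndependent ℝ v ∧
    C = {x | ∃ c : Fin k → ℝ, (∀ i, 0 ≤ c i) ∧ x = ∑ i, c i • v i}

/-- A rational cone: the nonnegative span of finitely many rational vectors. -/
def IsRationalCone {n : ℕ} (C : Set (Fin n → ℝ)) : Prop :=
  ∃ (k : ℕ) (v : Fin k → Fin n → ℝ), (∀ i j, ∃ q : ℚ, v i j = (q : ℝ)) ∧
    C = {x | ∃ c : Fin k → ℝ, (∀ i, 0 ≤ c i) ∧ x = ∑ i, c i • v i}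

/-- `F'` is the rational part of the fan `F`. -/
def IsRationalPart {n : ℕ} (F F' : Set (Set (Fin n → ℝ))) : Prop :=
  IsFan F' ∧ (∀ C ∈ F', IsRationalCone C) ∧
  (∀ C ∈ F', ∃ D ∈ F, C ⊆ D) ∧
  ∀ C ∈ F, ∃ D ∈ F', D ⊆ C ∧ (∀ D' ∈ F', D' ⊆ C → D' ⊆ D) ∧
    ∀ x ∈ C, (∀ j, ∃ q : ℚ, x j = (q : ℝ)) → x ∈ D

/-- `v` is the smallest nonzero integer vector in the cone `C`. -/
def IsSmallestIntVec {n : ℕ} (C : Set (Fin n → ℝ)) (v : Fin n → ℝ) : Prop :=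
  v ∈ C ∧ v ≠ 0 ∧ (∀ j, ∃ m : ℤ, v j = (m : ℝ)) ∧
    ∀ w ∈ C, w ≠ 0 → (∀ j, ∃ m : ℤ, w j = (m : ℝ)) → ‖v‖ ≤ ‖w‖

end MutationFanPaper

/-!
A `B`-coherent linear relation `∑ cᵢ • vᵢ` is nothing but an ordinary linear relation among the
vectors `Φ vᵢ = (η_κ^B vᵢ, min (η_κ^B vᵢ) 0)_κ`. Hence, for a subfield `K` of `ℝ`, any subset of
`Kⁿ` that is maximal among those on which `Φ` is `K`-linearly independent (Zorn) is a `K`-basis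
for `B`: independence is immediate, and by maximality `Φ` of every `a ∈ Kⁿ` lies in the `K`-span.
-/

namespace MutationFanPaper

variable {n : ℕ} (B : Matrix (Fin n) (Fin n) ℤ)

/-- The vector `Φ a` of the header. -/
noncomputable def coherentImage (a : Fin n → ℝ) :
    (List (Fin n) → Fin n → ℝ) × (List (Fin n) → Fin n → ℝ) :=
  (fun κ => etaSeq B κ a, fun κ j => min (etaSeq B κ a j) 0)

lemma isBCoherentRel_iff {ι : Type*} (S : Finset ι) (v : ι → Fin n → ℝ) (c : ι → ℝ) :
    IsBCoherentRel B S v c ↔ ∑ i ∈ S, c i • coherentImage B (v i) = 0 := by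
  simp only [IsBCoherentRel, coherentImage, Prod.ext_iff, Prod.fst_sum, Prod.snd_sum,
    Prod.smul_fst, Prod.smul_snd, Prod.fst_zero, Prod.snd_zero, funext_iff, Finset.sum_apply,
    Pi.smul_apply, Pi.zero_apply, forall_and]

lemma isBCoherentDiff_iff (a : Fin n → ℝ) {ι : Type*} (S : Finset ι) (v : ι → Fin n → ℝ)
    (c : ι → ℝ) :
    IsBCoherentDiff B a S v c ↔ coherentImage B a = ∑ i ∈ S, c i • coherentImage B (v i) := by
  simp only [IsBCoherentDiff, coherentImage, sub_eq_zero, Prod.ext_iff, Prod.fst_sum,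
    Prod.snd_sum, Prod.smul_fst, Prod.smul_snd, funext_iff, Finset.sum_apply, Pi.smul_apply,
    forall_and]

lemma Subfield.exists_coe_eqOn {L : Type*} [DivisionRing L] {K : Subfield L} {ι : Type*}
    {S : Finset ι} {c : ι → L} (hc : ∀ i ∈ S, c i ∈ K) :
    ∃ g : ι → K, ∀ i ∈ S, (g i : L) = c i := by
  classical
  exact ⟨fun i => if h : c i ∈ K then ⟨c i, h⟩ else 0, fun i hi => by simp [hc i hi]⟩

variable {B}

lemma independentOver_of_linearIndependent {K : Subfield ℝ} {ι : Type*} {b : ι → Fin n → ℝ}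
    (hbK : ∀ i j, b i j ∈ K) (hb : LinearIndependent K fun i => coherentImage B (b i)) :
    IndependentOver K.toSubring B b := by
  refine ⟨hbK, fun S c hcK hrel => ?_⟩
  obtain ⟨g, hg⟩ := Subfield.exists_coe_eqOn hcK
  have hgrel : ∑ i ∈ S, g i • coherentImage B (b i) = 0 := by
    rw [← (isBCoherentRel_iff B S b c).mp hrel]
    exact Finset.sum_congr rfl fun i hi => by rw [Subfield.smul_def, hg i hi]
  intro i hi
  rw [← hg i hi, linearIndependent_iff'.mp hb S g hgrel i hi, ZeroMemClass.coe_zero]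

lemma spanningOver_of_mem_span {K : Subfield ℝ} {ι : Type*} {b : ι → Fin n → ℝ}
    (hbK : ∀ i j, b i j ∈ K)
    (hspan : ∀ a : Fin n → ℝ, (∀ j, a j ∈ K) →
      coherentImage B a ∈ Submodule.span K (Set.range fun i => coherentImage B (b i))) :
    SpanningOver K.toSubring B b := by
  refine ⟨hbK, fun a haK => ?_⟩
  obtain ⟨c, hc⟩ := Finsupp.mem_span_range_iff_exists_finsupp.mp (hspan a haK)
  refine ⟨c.support, fun i => c i, fun i _ => (c i).2, (isBCoherentDiff_iff B a _ b _).mpr ?_⟩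
  rw [← hc, Finsupp.sum]
  exact Finset.sum_congr rfl fun i _ => Subfield.smul_def _ _

variable (B)

theorem exists_basisOver_of_subfield (K : Subfield ℝ) :
    ∃ V : Set (Fin n → ℝ), BasisOver K.toSubring B (fun v : V => (v : Fin n → ℝ)) := by
  obtain ⟨V, hVK, -, hspan, hV⟩ := exists_linearIndepOn_extension (linearIndepOn_empty K _)
    (Set.empty_subset {a : Fin n → ℝ | ∀ j, a j ∈ K}) (v := coherentImage B)
  refine ⟨V, spanningOver_of_mem_span (fun v => hVK v.2) fun a haK => ?_,
    independentOver_of_linearIndependent (fun v => hVK v.2) hV⟩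
  rw [← Set.image_eq_range]
  exact hspan ⟨a, haK, rfl⟩

theorem exists_basisOver_general {n : ℕ} (B : Matrix (Fin n) (Fin n) ℤ)
    (R : Subring ℝ)
    (hR : R = ratSR ∨ R = (⊤ : Subring ℝ)) :
    ∃ V : Set (Fin n → ℝ), BasisOver R B (fun v : V => (v : Fin n → ℝ)) := by
  obtain ⟨K, rfl⟩ : ∃ K : Subfield ℝ, K.toSubring = R := by
    rcases hR with rfl | rfl
    exacts [⟨(Rat.castHom ℝ).fieldRange, rfl⟩, ⟨⊤, rfl⟩]
  exact exists_basisOver_of_subfield B K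

/-- For any exchange matrix `B` and `R = ℚ` or `R = ℝ`,
there exists an `R`-basis for `B`. -/
theorem exists_basisOver {n : ℕ} (hn : 1 ≤ n) (B : Matrix (Fin n) (Fin n) ℤ)
    (hB : IsExchangeMatrix B) (R : Subring ℝ)
    (hR : R = ratSR ∨ R = (⊤ : Subring ℝ)) :
    ∃ V : Set (Fin n → ℝ), BasisOver R B (fun v : V => (v : Fin n → ℝ)) :=
  exists_basisOver_general B R hR

end MutationFanPaper
end

section
/- Let B be an n×n exchange matrix having no row consisting entirely of zeros, let R be one of ℤ, ℚ, ℝ, let S be a finite set, let (v_i : i ∈ S) be vectors in ℝ^n and let (c_i : i ∈ S) be elements of R. Then Σ_{i∈S} c_i·v_i is a B-coherent linear relation if and only if Σ_{i∈S} c_i·η_κ^B(v_i) = 0 holds for every finite sequence κ of indices in [n]. -/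
open scoped BigOperators

namespace MutationFanPaper

/-! Fix `κ` and a coordinate `k`, and let `B' = μ_κ B`. Skew-symmetrizability kills the diagonal,
and mutation preserves the property that every row has a nonzero off-diagonal entry; pick
`j ≠ k` with `b = B'_{kj} ≠ 0`. In coordinate `j`,
`η_k^{B'}(a)_j = a_j + max(b, 0) a_k - b min(a_k, 0)`, so the linear relations after `κ` and
after `κ, k` together force `Σ c_i min(η_κ(v_i)_k, 0) = 0`. -/

lemma etaSeq_append_singleton {n : ℕ} (B : Matrix (Fin n) (Fin n) ℤ) (κ : List (Fin n))
    (k : Fin n) (a : Fin n → ℝ) :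
    etaSeq B (κ ++ [k]) a = etaStep (mutateSeq B κ) k (etaSeq B κ a) := by
  induction κ generalizing B a with
  | nil => rfl
  | cons h t ih => exact ih (mutate B h) (etaStep B h a)

lemma etaStep_apply_of_ne {n : ℕ} (B : Matrix (Fin n) (Fin n) ℤ) {k j : Fin n} (hjk : j ≠ k)
    (a : Fin n → ℝ) :
    etaStep B k a j = a j + max (B k j : ℝ) 0 * a k - B k j * min (a k) 0 := by
  simp only [etaStep, if_neg hjk, ← Int.cast_nonneg_iff (R := ℝ), ← Int.cast_nonpos (R := ℝ)]
  generalize (B k j : ℝ) = b, a k = x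
  split_ifs with h₁ h₂
  · rw [max_eq_left h₁.2, min_eq_right h₁.1]; ring
  · rw [max_eq_right h₂.2, min_eq_left h₂.1]; ring
  · rcases le_total 0 x with hx | hx
    · rw [max_eq_right (by grind), min_eq_right hx]; ring
    · rw [max_eq_left (by grind), min_eq_left hx]; ring

lemma IsExchangeMatrix.diag_eq_zero {n : ℕ} {B : Matrix (Fin n) (Fin n) ℤ}
    (hB : IsExchangeMatrix B) (i : Fin n) : B i i = 0 := by
  obtain ⟨d, hd, hskew⟩ := hB
  have h2 : 2 * (d i * B i i) = 0 := by linarith [hskew i i]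
  simpa [(hd i).ne'] using h2

lemma mutate_exists_ne_ne_zero {n : ℕ} {B : Matrix (Fin n) (Fin n) ℤ}
    (hB : ∀ i, ∃ j, j ≠ i ∧ B i j ≠ 0) (k i : Fin n) :
    ∃ j, j ≠ i ∧ mutate B k i j ≠ 0 := by
  obtain ⟨j, hji, hj⟩ := hB i
  by_cases hik : i = k
  · subst hik
    exact ⟨j, hji, by simp [mutate, hj]⟩
  by_cases hBik : B i k = 0
  · have hjk : j ≠ k := by rintro rfl; exact hj hBik
    exact ⟨j, hji, by simp [mutate, hik, hjk, hBik, hj]⟩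
  · exact ⟨k, Ne.symm hik, by simp [mutate, hBik]⟩

lemma mutateSeq_exists_ne_ne_zero {n : ℕ} {B : Matrix (Fin n) (Fin n) ℤ}
    (hB : ∀ i, ∃ j, j ≠ i ∧ B i j ≠ 0) (κ : List (Fin n)) (i : Fin n) :
    ∃ j, j ≠ i ∧ mutateSeq B κ i j ≠ 0 := by
  induction κ generalizing B with
  | nil => exact hB i
  | cons k κ ih => exact ih (mutate_exists_ne_ne_zero hB k)

lemma sum_mul_min_eq_zero_of_etaStep {n : ℕ} {B : Matrix (Fin n) (Fin n) ℤ} {k j : Fin n}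
    (hjk : j ≠ k) (hb : B k j ≠ 0) {ι : Type*} {S : Finset ι} {c : ι → ℝ}
    {a : ι → Fin n → ℝ} (h₀ : ∑ i ∈ S, c i • a i = 0)
    (h₁ : ∑ i ∈ S, c i • etaStep B k (a i) = 0) :
    ∑ i ∈ S, c i * min (a i k) 0 = 0 := by
  have coord {f : ι → Fin n → ℝ} (h : ∑ i ∈ S, c i • f i = 0) (m : Fin n) :
      ∑ i ∈ S, c i * f i m = 0 := by
    simpa [Finset.sum_apply] using congrFun h m
  have hexpand : ∑ i ∈ S, c i * etaStep B k (a i) j = ∑ i ∈ S, c i * a i j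
      + max (B k j : ℝ) 0 * ∑ i ∈ S, c i * a i k - B k j * ∑ i ∈ S, c i * min (a i k) 0 := by
    simp only [etaStep_apply_of_ne B hjk, Finset.mul_sum, ← Finset.sum_add_distrib,
      ← Finset.sum_sub_distrib]
    exact Finset.sum_congr rfl fun i _ => by ring
  rw [coord h₁ j, coord h₀ j, coord h₀ k] at hexpand
  have hb' : (B k j : ℝ) ≠ 0 := Int.cast_ne_zero.mpr hb
  exact (mul_eq_zero.mp (by linarith : (B k j : ℝ) * _ = 0)).resolve_left hb'

theorem isBCoherentRel_iff_of_no_zero_row_general {n : ℕ}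
    (B : Matrix (Fin n) (Fin n) ℤ) (hB : IsExchangeMatrix B)
    (hrow : ∀ i, ∃ j, B i j ≠ 0)
    {ι : Type} (S : Finset ι) (v : ι → Fin n → ℝ) (c : ι → ℝ) :
    IsBCoherentRel B S v c ↔
      ∀ κ : List (Fin n), (∑ i ∈ S, c i • etaSeq B κ (v i)) = 0 := by
  refine ⟨fun h κ => (h κ).1, fun H κ => ⟨H κ, ?_⟩⟩
  have hoff (i : Fin n) : ∃ j, j ≠ i ∧ B i j ≠ 0 := by
    obtain ⟨j, hj⟩ := hrow i
    exact ⟨j, fun hji => hj (hji ▸ hB.diag_eq_zero i), hj⟩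
  funext k
  obtain ⟨j, hjk, hb⟩ := mutateSeq_exists_ne_ne_zero hoff κ k
  have hstep := H (κ ++ [k])
  simp only [etaSeq_append_singleton] at hstep
  simpa [Finset.sum_apply] using sum_mul_min_eq_zero_of_etaStep hjk hb (H κ) hstep

/-- If no row of `B` consists entirely of zeros, then a formal expression
`Σ_{i∈S} c i • v i` with coefficients in `R` (one of ℤ, ℚ, ℝ) is a `B`-coherent linear
relation if and only if `Σ_{i∈S} c i • η_κ^B (v i) = 0` for every finite sequence `κ`. -/
theorem isBCoherentRel_iff_of_no_zero_row {n : ℕ} (hn : 1 ≤ n)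
    (B : Matrix (Fin n) (Fin n) ℤ) (hB : IsExchangeMatrix B)
    (hrow : ∀ i, ∃ j, B i j ≠ 0) (R : Subring ℝ)
    (hR : R = intSR ∨ R = ratSR ∨ R = (⊤ : Subring ℝ))
    {ι : Type} (S : Finset ι) (v : ι → Fin n → ℝ) (c : ι → ℝ)
    (hc : ∀ i ∈ S, c i ∈ R) :
    IsBCoherentRel B S v c ↔
      ∀ κ : List (Fin n), (∑ i ∈ S, c i • etaSeq B κ (v i)) = 0 :=
  isBCoherentRel_iff_of_no_zero_row_general B hB hrow S v c

end MutationFanPaper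
end

section
/- Let B be an n×n exchange matrix. Then every B-class is a convex cone, and every B-cone is a closed convex cone. -/
open scoped BigOperators

/-! Each mutation map `η_k^B` is linear on each of the half-spaces `a k ≥ 0` and `a k ≤ 0`, hence
positively homogeneous, and additive on pairs whose `k`-th coordinates have the same sign. Points of
one `B`-class keep equal signs along every mutation sequence, so `η_κ^B` is additive on the class,
and sums and positive multiples of class members keep the sign pattern of the class. -/

namespace Real

theorem sign_eq_sign_cases {x y : ℝ} (h : sign x = sign y) :
    (x < 0 ∧ y < 0) ∨ (x = 0 ∧ y = 0) ∨ (0 < x ∧ 0 < y) := by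
  rcases lt_trichotomy x 0 with hx | hx | hx <;> rcases lt_trichotomy y 0 with hy | hy | hy <;>
    simp only [sign_of_neg, sign_of_pos, sign_zero, hx, hy] at h <;> first | tauto | norm_num at h

theorem mul_nonneg_of_sign_eq {x y : ℝ} (h : sign x = sign y) : 0 ≤ x * y := by
  rcases sign_eq_sign_cases h with ⟨hx, hy⟩ | ⟨rfl, -⟩ | ⟨hx, hy⟩
  · exact (mul_pos_of_neg_of_neg hx hy).le
  · simp
  · exact (mul_pos hx hy).le

theorem sign_add_of_sign_eq {x y : ℝ} (h : sign x = sign y) : sign (x + y) = sign x := by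
  rcases sign_eq_sign_cases h with ⟨hx, hy⟩ | ⟨rfl, rfl⟩ | ⟨hx, hy⟩
  · rw [sign_of_neg hx, sign_of_neg (add_neg hx hy)]
  · simp
  · rw [sign_of_pos hx, sign_of_pos (add_pos hx hy)]

theorem sign_mul_of_pos {r : ℝ} (x : ℝ) (hr : 0 < r) : sign (r * x) = sign x := by
  rcases lt_trichotomy x 0 with hx | rfl | hx
  · rw [sign_of_neg hx, sign_of_neg (mul_neg_of_pos_of_neg hr hx)]
  · simp
  · rw [sign_of_pos hx, sign_of_pos (mul_pos hr hx)]

end Real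

namespace MutationFanPaper

variable {n : ℕ}

section etaStep

variable (B : Matrix (Fin n) (Fin n) ℤ) (k : Fin n) {a a' : Fin n → ℝ}

theorem etaStep_of_nonneg (ha : 0 ≤ a k) :
    etaStep B k a = fun j => if j = k then -a k else a j + a k * max (B k j : ℝ) 0 := by
  funext j
  rcases ha.eq_or_lt with h0 | hpos
  · simp [etaStep, ← h0]
  · by_cases hb : 0 ≤ B k j
    · simp [etaStep, hpos.le, hb]
    · simp [etaStep, hpos.not_ge, hb, le_of_not_ge hb]

theorem etaStep_of_nonpos (ha : a k ≤ 0) :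
    etaStep B k a = fun j => if j = k then -a k else a j - a k * min (B k j : ℝ) 0 := by
  funext j
  rcases ha.eq_or_lt with h0 | hneg
  · simp [etaStep, h0]
  · by_cases hb : B k j ≤ 0
    · simp [etaStep, hneg.le, hneg.not_ge, hb]
    · simp [etaStep, hneg.not_ge, hb, le_of_not_ge hb]

theorem etaStep_add_of_mul_nonneg (h : 0 ≤ a k * a' k) :
    etaStep B k (a + a') = etaStep B k a + etaStep B k a' := by
  rcases mul_nonneg_iff.1 h with ⟨ha, ha'⟩ | ⟨ha, ha'⟩
  · rw [etaStep_of_nonneg B k ha, etaStep_of_nonneg B k ha',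
      etaStep_of_nonneg (a := a + a') B k (add_nonneg ha ha')]
    funext j
    simp only [Pi.add_apply]
    split_ifs <;> ring
  · rw [etaStep_of_nonpos B k ha, etaStep_of_nonpos B k ha',
      etaStep_of_nonpos (a := a + a') B k (add_nonpos ha ha')]
    funext j
    simp only [Pi.add_apply]
    split_ifs <;> ring

theorem etaStep_smul_of_pos {r : ℝ} (hr : 0 < r) : etaStep B k (r • a) = r • etaStep B k a := by
  rcases le_total 0 (a k) with ha | ha
  · rw [etaStep_of_nonneg B k ha, etaStep_of_nonneg (a := r • a) B k (mul_nonneg hr.le ha)]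
    funext j
    simp only [Pi.smul_apply, smul_eq_mul]
    split_ifs <;> ring
  · rw [etaStep_of_nonpos B k ha,
      etaStep_of_nonpos (a := r • a) B k (mul_nonpos_of_nonneg_of_nonpos hr.le ha)]
    funext j
    simp only [Pi.smul_apply, smul_eq_mul]
    split_ifs <;> ring

end etaStep

theorem etaSeq_add_of_eqB (B : Matrix (Fin n) (Fin n) ℤ) (κ : List (Fin n)) {a a' : Fin n → ℝ}
    (h : eqB B a a') : etaSeq B κ (a + a') = etaSeq B κ a + etaSeq B κ a' := by
  induction κ generalizing B a a' with
  | nil => rfl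
  | cons k κ ih =>
    have hk : Real.sign (a k) = Real.sign (a' k) := h [] k
    simp only [etaSeq]
    rw [etaStep_add_of_mul_nonneg B k (Real.mul_nonneg_of_sign_eq hk)]
    exact ih _ fun κ' j => h (k :: κ') j

theorem etaSeq_smul_of_pos (B : Matrix (Fin n) (Fin n) ℤ) (κ : List (Fin n)) (a : Fin n → ℝ)
    {r : ℝ} (hr : 0 < r) : etaSeq B κ (r • a) = r • etaSeq B κ a := by
  induction κ generalizing B a with
  | nil => rfl
  | cons k κ ih =>
    simp only [etaSeq]
    rw [etaStep_smul_of_pos B k hr]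
    exact ih _ _

section eqB

variable (B : Matrix (Fin n) (Fin n) ℤ) {a x y : Fin n → ℝ}

theorem eqB_add (hx : eqB B a x) (hy : eqB B a y) : eqB B a (x + y) := fun κ j => by
  have hxy : eqB B x y := fun κ j => (hx κ j).symm.trans (hy κ j)
  rw [etaSeq_add_of_eqB B κ hxy, Pi.add_apply, Real.sign_add_of_sign_eq (hxy κ j)]
  exact hx κ j

theorem eqB_smul_of_pos (hx : eqB B a x) {r : ℝ} (hr : 0 < r) : eqB B a (r • x) := fun κ j => by
  rw [etaSeq_smul_of_pos B κ x hr, Pi.smul_apply, smul_eq_mul, Real.sign_mul_of_pos _ hr]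
  exact hx κ j

end eqB

theorem IsBClass.isConvexCone {B : Matrix (Fin n) (Fin n) ℤ} {C : Set (Fin n → ℝ)}
    (hC : IsBClass B C) : IsConvexCone C := by
  obtain ⟨a, rfl⟩ := hC
  exact ⟨fun _ hx _ hy => eqB_add B hx hy, fun _ hx _ hr => eqB_smul_of_pos B hx hr⟩

theorem IsConvexCone.closure {C : Set (Fin n → ℝ)} (hC : IsConvexCone C) :
    IsConvexCone (closure C) :=
  ⟨fun _ hx _ hy => map_mem_closure₂ continuous_add hx hy hC.1,
    fun _ hx r hr => map_mem_closure (continuous_const_smul r) hx fun y hy => hC.2 y hy r hr⟩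

theorem IsBCone.isClosed_and_isConvexCone {B : Matrix (Fin n) (Fin n) ℤ} {C : Set (Fin n → ℝ)}
    (hC : IsBCone B C) : IsClosed C ∧ IsConvexCone C := by
  obtain ⟨D, hD, rfl⟩ := hC
  exact ⟨isClosed_closure, hD.isConvexCone.closure⟩

theorem bClass_isConvexCone_and_bCone_isClosed_isConvexCone_general {n : ℕ}
    (B : Matrix (Fin n) (Fin n) ℤ) :
    (∀ C : Set (Fin n → ℝ), IsBClass B C → IsConvexCone C) ∧
    (∀ C : Set (Fin n → ℝ), IsBCone B C → IsClosed C ∧ IsConvexCone C) :=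
  ⟨fun _ hC => hC.isConvexCone, fun _ hC => hC.isClosed_and_isConvexCone⟩

/-- Every `B`-class is a convex cone, and every `B`-cone is a closed
convex cone. -/
theorem bClass_isConvexCone_and_bCone_isClosed_isConvexCone {n : ℕ} (hn : 1 ≤ n)
    (B : Matrix (Fin n) (Fin n) ℤ) (hB : IsExchangeMatrix B) :
    (∀ C : Set (Fin n → ℝ), IsBClass B C → IsConvexCone C) ∧
    (∀ C : Set (Fin n → ℝ), IsBCone B C → IsClosed C ∧ IsConvexCone C) :=
  bClass_isConvexCone_and_bCone_isClosed_isConvexCone_general B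

end MutationFanPaper
end

section
/- Let B be an n×n exchange matrix, let C be a B-cone, and let κ be any finite sequence of indices in [n]. Then the mutation map η_κ^B is linear on C: there exists a linear map L : ℝ^n → ℝ^n such that η_κ^B(a) = L(a) for all a ∈ C. -/
open scoped BigOperators

/-!
The single step `η_k^B` is piecewise linear, with one linear piece on `a_k ≥ 0` and one on
`a_k ≤ 0`. On a `B`-class the sign of every coordinate of every `η_κ^B(a)` is constant, so by
induction along `κ` each step, and hence `η_κ^B`, agrees with a fixed linear map on the class.
Since `η_κ^B` is continuous, the agreement passes to the closure, the `B`-cone.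
-/

namespace MutationFanPaper

lemma nonneg_iff_of_sign_eq {x y : ℝ} (h : Real.sign x = Real.sign y) : 0 ≤ x ↔ 0 ≤ y := by
  have key : ∀ r : ℝ, 0 ≤ r ↔ 0 ≤ Real.sign r := fun r => by
    rcases lt_trichotomy r 0 with hr | rfl | hr
    · simp [Real.sign_of_neg hr, hr.not_ge]
    · simp
    · simp [Real.sign_of_pos hr, hr.le]
  rw [key x, key y, h]

noncomputable def etaStepLinear {n : ℕ} (k : Fin n) (c : Fin n → ℝ) :
    (Fin n → ℝ) →ₗ[ℝ] (Fin n → ℝ) :=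
  LinearMap.pi fun j =>
    if j = k then -LinearMap.proj k else LinearMap.proj j + c j • LinearMap.proj k

lemma etaStepLinear_apply {n : ℕ} (k : Fin n) (c a : Fin n → ℝ) (j : Fin n) :
    etaStepLinear k c a j = if j = k then -a k else a j + c j * a k := by
  by_cases hj : j = k <;> simp [etaStepLinear, hj]

section etaStep

variable {n : ℕ} (B : Matrix (Fin n) (Fin n) ℤ) (k : Fin n) {a : Fin n → ℝ}

lemma etaStep_eq_of_nonneg (ha : 0 ≤ a k) :
    etaStep B k a = etaStepLinear k (fun j => max (B k j : ℝ) 0) a := by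
  funext j
  rw [etaStep, etaStepLinear_apply]
  obtain h0 | hpos := ha.eq_or_lt
  · simp [← h0]
  rcases lt_or_ge (B k j) 0 with hb | hb
  · simp [hpos.not_ge, hb.not_ge, hb.le]
  · simp [hpos.le, hb, mul_comm]

lemma etaStep_eq_of_nonpos (ha : a k ≤ 0) :
    etaStep B k a = etaStepLinear k (fun j => -min (B k j : ℝ) 0) a := by
  funext j
  rw [etaStep, etaStepLinear_apply]
  obtain h0 | hneg := ha.eq_or_lt
  · simp [h0]
  rcases lt_or_ge 0 (B k j) with hb | hb
  · simp [hneg.not_ge, hb.not_ge, hb.le]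
  · simp [hneg.le, hneg.not_ge, hb, mul_comm, sub_eq_add_neg]

lemma exists_etaStep_eq_linear_of_sign_eq (a₀ : Fin n → ℝ) :
    ∃ c, ∀ a : Fin n → ℝ, Real.sign (a₀ k) = Real.sign (a k) →
      etaStep B k a = etaStepLinear k c a := by
  by_cases h₀ : 0 ≤ a₀ k
  · exact ⟨_, fun a h => etaStep_eq_of_nonneg B k ((nonneg_iff_of_sign_eq h).1 h₀)⟩
  · exact ⟨_, fun a h => etaStep_eq_of_nonpos B k
      (le_of_not_ge fun ha => h₀ ((nonneg_iff_of_sign_eq h).2 ha))⟩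

lemma continuous_etaStep : Continuous (etaStep B k) := by
  have h : etaStep B k = fun a => if a k ≤ 0
      then etaStepLinear k (fun j => -min (B k j : ℝ) 0) a
      else etaStepLinear k (fun j => max (B k j : ℝ) 0) a := by
    funext a
    split_ifs with ha
    · exact etaStep_eq_of_nonpos B k ha
    · exact etaStep_eq_of_nonneg B k (not_le.mp ha).le
  rw [h]
  refine continuous_if_le (continuous_apply k) continuous_const
    (LinearMap.continuous_of_finiteDimensional _).continuousOn
    (LinearMap.continuous_of_finiteDimensional _).continuousOn fun a ha => ?_
  rw [← etaStep_eq_of_nonpos B k ha.le, ← etaStep_eq_of_nonneg B k ha.ge]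

end etaStep

lemma continuous_etaSeq {n : ℕ} (B : Matrix (Fin n) (Fin n) ℤ) (κ : List (Fin n)) :
    Continuous (etaSeq B κ) := by
  induction κ generalizing B with
  | nil => exact continuous_id
  | cons k κ ih => exact (ih (mutate B k)).comp (continuous_etaStep B k)

lemma exists_linear_eq_etaSeq_of_eqB {n : ℕ} (B : Matrix (Fin n) (Fin n) ℤ)
    (κ : List (Fin n)) (a₀ : Fin n → ℝ) :
    ∃ L : (Fin n → ℝ) →ₗ[ℝ] (Fin n → ℝ), ∀ a, eqB B a₀ a → etaSeq B κ a = L a := by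
  induction κ generalizing B a₀ with
  | nil => exact ⟨LinearMap.id, fun _ _ => rfl⟩
  | cons k κ ih =>
    obtain ⟨c, hc⟩ := exists_etaStep_eq_linear_of_sign_eq B k a₀
    obtain ⟨L, hL⟩ := ih (mutate B k) (etaStep B k a₀)
    refine ⟨L ∘ₗ etaStepLinear k c, fun a ha => ?_⟩
    have ha' : eqB (mutate B k) (etaStep B k a₀) (etaStep B k a) := fun κ' => ha (k :: κ')
    rw [LinearMap.comp_apply, ← hc a (ha [] k)]
    exact hL _ ha'

theorem etaSeq_linear_on_bCone_general {n : ℕ} (B : Matrix (Fin n) (Fin n) ℤ)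
    (C : Set (Fin n → ℝ)) (hC : IsBCone B C)
    (κ : List (Fin n)) :
    ∃ L : (Fin n → ℝ) →ₗ[ℝ] (Fin n → ℝ), ∀ a ∈ C, etaSeq B κ a = L a := by
  obtain ⟨D, ⟨a₀, rfl⟩, rfl⟩ := hC
  obtain ⟨L, hL⟩ := exists_linear_eq_etaSeq_of_eqB B κ a₀
  exact ⟨L, Set.EqOn.closure hL (continuous_etaSeq B κ) L.continuous_of_finiteDimensional⟩

/-- Every mutation map `η_κ^B` is linear on every `B`-cone. -/
theorem etaSeq_linear_on_bCone {n : ℕ} (hn : 1 ≤ n) (B : Matrix (Fin n) (Fin n) ℤ)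
    (hB : IsExchangeMatrix B) (C : Set (Fin n → ℝ)) (hC : IsBCone B C)
    (κ : List (Fin n)) :
    ∃ L : (Fin n → ℝ) →ₗ[ℝ] (Fin n → ℝ), ∀ a ∈ C, etaSeq B κ a = L a :=
  etaSeq_linear_on_bCone_general B C hC κ

end MutationFanPaper
end
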